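/- arXiv:1006.1350 — 5 statements merged into one kernel-verified Lean document; each statement's English description precedes it below -/
import Mathlib

section
/- Let X = (X₁,…,Xₙ) be a random vector on a probability space such that each marginal distribution function Fᵢ(t) = P(Xᵢ ≤ t) is continuous. Then there exists an n-copula C such that for all (x₁,…,xₙ) ∈ ℝⁿ, P(X₁ ≤ x₁, …, Xₙ ≤ xₙ) = C(F₁(x₁), …, Fₙ(xₙ)). (Existence part of Sklar's theorem for continuous marginals; the copula can be taken to be the joint distribution function of (F₁(X₁),…,Fₙ(Xₙ)).) -/
/-!
Put `Uᵢ = Fᵢ(Xᵢ)` and let `C` be the joint distribution function of `U = (U₁, …, Uₙ)`.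
For a continuous distribution function `F`, every sublevel set `{F ≤ c}` with `c < 1` is a
half-line `(-∞, s]` with `F s = c` (or empty, when `c ≤ 0`); hence `F(X)` is uniform on `[0,1]`,
so `C` is a copula, and `{F(X) ≤ F(x)}` differs from `{X ≤ x}` only by a null set, so that
`P(U₁ ≤ F₁(x₁), …, Uₙ ≤ Fₙ(xₙ)) = P(X₁ ≤ x₁, …, Xₙ ≤ xₙ)`.
-/

open MeasureTheory ProbabilityTheory Set Filter Topology

theorem Monotone.exists_preimage_Iic_eq_Iic
    {α β : Type*} [ConditionallyCompleteLinearOrder α] [TopologicalSpace α] [OrderTopology α]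
    [DenselyOrdered α] [LinearOrder β] [TopologicalSpace β] [OrderClosedTopology β]
    {F : α → β} (hmono : Monotone F) (hcont : Continuous F) {c : β}
    (hne : (F ⁻¹' Iic c).Nonempty) {x : α} (hx : c < F x) :
    ∃ s, F s = c ∧ F ⁻¹' Iic c = Iic s := by
  have hbdd : BddAbove (F ⁻¹' Iic c) :=
    ⟨x, fun y hy => (hmono.reflect_lt (hy.trans_lt hx)).le⟩
  set s := sSup (F ⁻¹' Iic c)
  have hs : F s ≤ c := (isClosed_Iic.preimage hcont).csSup_mem hne hbdd
  have hsx : s ≤ x := (hmono.reflect_lt (hs.trans_lt hx)).le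
  have hS : F ⁻¹' Iic c = Iic s := Subset.antisymm (fun y hy => le_csSup hbdd hy)
    fun y hy => (hmono hy).trans hs
  -- an intermediate value `F y = c` on `[s, x]` lies in `F ⁻¹' Iic c = Iic s`, so `y = s`
  obtain ⟨y, ⟨hsy, -⟩, hy⟩ := intermediate_value_Icc hsx hcont.continuousOn ⟨hs, hx.le⟩
  have hys : y ∈ Iic s := hS ▸ show y ∈ F ⁻¹' Iic c from hy.le
  exact ⟨s, le_antisymm hys hsy ▸ hy, hS⟩

lemma ProbabilityTheory.cdf_map_apply {Ω : Type*} [MeasurableSpace Ω] {P : Measure Ω}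
    [IsProbabilityMeasure P] {X : Ω → ℝ} (hX : Measurable X) (t : ℝ) :
    cdf (P.map X) t = (P {ω | X ω ≤ t}).toReal := by
  have := Measure.isProbabilityMeasure_map (μ := P) hX.aemeasurable
  rw [cdf_eq_real, measureReal_def, Measure.map_apply hX measurableSet_Iic]
  rfl

namespace ProbabilityTheory

variable {μ : Measure ℝ} [IsProbabilityMeasure μ]

lemma measure_cdf_preimage_Iic (hcont : Continuous (cdf μ)) (c : ℝ) :
    μ (cdf μ ⁻¹' Iic c) = ENNReal.ofReal (min c 1) := by
  rcases lt_or_ge c 1 with hc | hc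
  · rw [min_eq_left hc.le]
    obtain hempty | hne := (cdf μ ⁻¹' Iic c).eq_empty_or_nonempty
    · have hc0 : c ≤ 0 := by
        by_contra! hc0
        obtain ⟨y, hy⟩ := ((tendsto_cdf_atBot μ).eventually (eventually_lt_nhds hc0)).exists
        exact hempty.subset (show y ∈ cdf μ ⁻¹' Iic c from hy.le)
      rw [hempty, measure_empty, ENNReal.ofReal_of_nonpos hc0]
    · obtain ⟨x, hx⟩ := ((tendsto_cdf_atTop μ).eventually (eventually_gt_nhds hc)).exists
      obtain ⟨s, hs, hS⟩ := (monotone_cdf μ).exists_preimage_Iic_eq_Iic hcont hne hx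
      rw [hS, ← ofReal_cdf, hs]
  · have huniv : cdf μ ⁻¹' Iic c = univ :=
      eq_univ_of_forall fun x => (cdf_le_one μ x).trans hc
    rw [min_eq_right hc, huniv, measure_univ, ENNReal.ofReal_one]

theorem map_cdf_eq_volume_restrict_Icc (hcont : Continuous (cdf μ)) :
    μ.map (cdf μ) = volume.restrict (Icc 0 1) := by
  refine Measure.ext_of_Iic _ _ fun c => ?_
  have hIcc : Iic c ∩ Icc 0 1 = Icc 0 (min c 1) := by
    ext u
    simp only [mem_inter_iff, mem_Iic, mem_Icc, le_min_iff]
    tauto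
  rw [Measure.map_apply hcont.measurable measurableSet_Iic, measure_cdf_preimage_Iic hcont,
    Measure.restrict_apply measurableSet_Iic, hIcc, Real.volume_Icc, sub_zero]

lemma cdf_preimage_Iic_cdf_ae_eq (hcont : Continuous (cdf μ)) (t : ℝ) :
    cdf μ ⁻¹' Iic (cdf μ t) =ᵐ[μ] Iic t := by
  have hmeas : μ (cdf μ ⁻¹' Iic (cdf μ t)) ≤ μ (Iic t) := by
    rw [measure_cdf_preimage_Iic hcont, min_eq_left (cdf_le_one μ t), ofReal_cdf]
  exact (ae_eq_of_subset_of_measure_ge (fun x hx => monotone_cdf μ hx) hmeas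
    measurableSet_Iic.nullMeasurableSet (measure_ne_top _ _)).symm

end ProbabilityTheory

/-- **Existence part of Sklar's theorem for continuous marginals.**
If `X = (X₁, …, Xₙ)` is a random vector whose marginal distribution functions
`Fᵢ(t) = P(Xᵢ ≤ t)` are all continuous, then there exists an `n`-copula `C`
(the joint distribution function of a probability measure on `[0,1]ⁿ` with uniform
marginals) such that `P(X₁ ≤ x₁, …, Xₙ ≤ xₙ) = C(F₁(x₁), …, Fₙ(xₙ))` for all `x`. -/
theorem sklar_existence
    {Ω : Type*} [MeasureSpace Ω] [IsProbabilityMeasure (ℙ : Measure Ω)]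
    {n : ℕ} (X : Fin n → Ω → ℝ) (hX : ∀ i, Measurable (X i))
    (F : Fin n → ℝ → ℝ)
    (hFdef : ∀ i t, F i t = (ℙ {ω | X i ω ≤ t}).toReal)
    (hFcont : ∀ i, Continuous (F i)) :
    ∃ μ : Measure (Fin n → ℝ), IsProbabilityMeasure μ ∧
      (∀ i, Measure.map (fun v => v i) μ = volume.restrict (Set.Icc (0:ℝ) 1)) ∧
      ∀ x : Fin n → ℝ,
        ℙ {ω | ∀ i, X i ω ≤ x i} = μ {v | ∀ i, v i ≤ F i (x i)} := by
  obtain rfl : F = fun i => ⇑(cdf (Measure.map (X i) ℙ)) :=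
    funext₂ fun i t => (hFdef i t).trans (cdf_map_apply (hX i) t).symm
  have hlaw i : IsProbabilityMeasure (Measure.map (X i) ℙ) :=
    Measure.isProbabilityMeasure_map (hX i).aemeasurable
  set U : Ω → Fin n → ℝ := fun ω i => cdf (Measure.map (X i) ℙ) (X i ω)
  have hU : Measurable U := measurable_pi_lambda _ fun i => (hFcont i).measurable.comp (hX i)
  refine ⟨Measure.map U ℙ, Measure.isProbabilityMeasure_map hU.aemeasurable,
    fun i => ?_, fun x => ?_⟩
  · calc Measure.map (fun v => v i) (Measure.map U ℙ)
        = (Measure.map (X i) ℙ).map (cdf (Measure.map (X i) ℙ)) := by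
          rw [Measure.map_map (measurable_pi_apply i) hU,
            Measure.map_map (hFcont i).measurable (hX i)]
          rfl
      _ = volume.restrict (Icc 0 1) := map_cdf_eq_volume_restrict_Icc (hFcont i)
  · have hmeas :
        MeasurableSet {v : Fin n → ℝ | ∀ i, v i ≤ cdf (Measure.map (X i) ℙ) (x i)} :=
      measurableSet_Iic
    rw [Measure.map_apply hU hmeas, ofPred_forall, ofPred_forall, preimage_iInter]
    exact measure_congr (EventuallyEq.iInter fun i =>
      ((hX i).quasiMeasurePreserving ℙ).preimage_ae_eq
        (cdf_preimage_Iic_cdf_ae_eq (hFcont i) (x i))).symm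
end

section
/- Let X = (X₁,…,Xₙ) be a random vector whose marginal distribution functions Fᵢ(t) = P(Xᵢ ≤ t) are all continuous, and suppose C and C′ are two n-copulas satisfying P(X₁ ≤ x₁,…,Xₙ ≤ xₙ) = C(F₁(x₁),…,Fₙ(xₙ)) = C′(F₁(x₁),…,Fₙ(xₙ)) for all (x₁,…,xₙ) ∈ ℝⁿ. Then C(u) = C′(u) for all u ∈ [0,1]ⁿ. (Uniqueness part of Sklar's theorem for continuous marginals.) -/
/-!
Every `u ∈ (0,1)ⁿ` is of the form `(F₁(x₁), …, Fₙ(xₙ))`, since each `Fᵢ` is a continuous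
distribution function and so takes every value in `(0,1)`; there `C(u) = P(X ≤ x) = C′(u)`.
If some `uᵢ ≤ 0` both copulas vanish, so they agree whenever every `uᵢ < 1`. The remaining
points of `[0,1]ⁿ` are reached from below: as the marginals of a copula are atomless, the
orthant `{v ≤ u}` differs from the increasing union of the orthants `{v ≤ u - 1/(k+1)}` by a
null set.
-/

open MeasureTheory ProbabilityTheory Set Filter Topology

section CoordinateMarginals

variable {ι : Type*} {ν : Measure (ι → ℝ)}

lemma measure_coord_preimage_eq_zero {i : ι}
    (hν : ν.map (fun v => v i) = volume.restrict (Icc (0 : ℝ) 1))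
    {s : Set ℝ} (hs : MeasurableSet s) (hs₀ : volume (s ∩ Icc (0 : ℝ) 1) = 0) :
    ν {v | v i ∈ s} = 0 := by
  change ν ((fun v => v i) ⁻¹' s) = 0
  rw [← Measure.map_apply (measurable_pi_apply i) hs, hν, Measure.restrict_apply hs, hs₀]

lemma measure_coord_eq_eq_zero {i : ι}
    (hν : ν.map (fun v => v i) = volume.restrict (Icc (0 : ℝ) 1)) (t : ℝ) :
    ν {v | v i = t} = 0 :=
  measure_coord_preimage_eq_zero hν (measurableSet_singleton t)
    (measure_mono_null inter_subset_left Real.volume_singleton)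

lemma measure_Iic_eq_zero_of_coord_nonpos {i : ι}
    (hν : ν.map (fun v => v i) = volume.restrict (Icc (0 : ℝ) 1))
    {w : ι → ℝ} (hw : w i ≤ 0) :
    ν (Iic w) = 0 := by
  have hnull : volume (Iic (w i) ∩ Icc (0 : ℝ) 1) = 0 :=
    measure_mono_null (fun y hy => le_antisymm (hy.1.trans hw) hy.2.1) Real.volume_singleton
  exact measure_mono_null (fun v hv => hv i)
    (measure_coord_preimage_eq_zero hν measurableSet_Iic hnull)

end CoordinateMarginals

section LeftContinuity

variable {ι : Type*} [Finite ι]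

lemma iUnion_Iic_sub_eq_setOf_forall_lt (u : ι → ℝ) :
    ⋃ k : ℕ, Iic (fun i => u i - 1 / ((k : ℝ) + 1)) = {v | ∀ i, v i < u i} := by
  ext v
  simp only [mem_iUnion, mem_Iic, mem_ofPred_eq, Pi.le_def]
  constructor
  · rintro ⟨k, hk⟩ i
    have : (0 : ℝ) < 1 / ((k : ℝ) + 1) := by positivity
    linarith [hk i]
  · intro hv
    have hsmall : ∀ᶠ k : ℕ in atTop, ∀ i, 1 / ((k : ℝ) + 1) < u i - v i :=
      eventually_all.2 fun i =>
        tendsto_one_div_add_atTop_nhds_zero_nat.eventually (gt_mem_nhds (sub_pos.2 (hv i)))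
    obtain ⟨k, hk⟩ := hsmall.exists
    exact ⟨k, fun i => by linarith [hk i]⟩

lemma measure_Iic_eq_iSup_Iic_sub {ν : Measure (ι → ℝ)} (hν : ∀ i t, ν {v | v i = t} = 0)
    (u : ι → ℝ) :
    ν (Iic u) = ⨆ k : ℕ, ν (Iic (fun i => u i - 1 / ((k : ℝ) + 1))) := by
  have hmono : Monotone fun k : ℕ => Iic (fun i => u i - 1 / ((k : ℝ) + 1)) := by
    intro k l hkl v hv i
    have : 1 / ((l : ℝ) + 1) ≤ 1 / ((k : ℝ) + 1) := by gcongr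
    linarith [hv i]
  rw [← hmono.measure_iUnion, iUnion_Iic_sub_eq_setOf_forall_lt]
  refine le_antisymm ?_ (measure_mono fun v hv => (fun i => (hv i).le))
  have hcover : Iic u ⊆ {v | ∀ i, v i < u i} ∪ ⋃ i, {v | v i = u i} := by
    intro v hv
    by_cases hlt : ∀ i, v i < u i
    · exact Or.inl hlt
    · push Not at hlt
      obtain ⟨i, hi⟩ := hlt
      exact Or.inr (mem_iUnion.2 ⟨i, le_antisymm (hv i) hi⟩)
  calc ν (Iic u) ≤ ν ({v | ∀ i, v i < u i} ∪ ⋃ i, {v | v i = u i}) := measure_mono hcover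
    _ ≤ ν {v | ∀ i, v i < u i} + ν (⋃ i, {v | v i = u i}) := measure_union_le _ _
    _ = ν {v | ∀ i, v i < u i} := by
      rw [measure_iUnion_null fun i => hν i (u i), add_zero]

lemma measure_Iic_eq_of_forall_lt_one {ν ν' : Measure (ι → ℝ)}
    (hν : ∀ i t, ν {v | v i = t} = 0) (hν' : ∀ i t, ν' {v | v i = t} = 0)
    (hagree : ∀ w : ι → ℝ, (∀ i, w i < 1) → ν (Iic w) = ν' (Iic w))
    {u : ι → ℝ} (hu : ∀ i, u i ≤ 1) :
    ν (Iic u) = ν' (Iic u) := by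
  rw [measure_Iic_eq_iSup_Iic_sub hν, measure_Iic_eq_iSup_Iic_sub hν']
  refine iSup_congr fun k => hagree _ fun i => ?_
  have : (0 : ℝ) < 1 / ((k : ℝ) + 1) := by positivity
  linarith [hu i]

end LeftContinuity

lemma Ioo_subset_range_cdf (P : Measure ℝ) [IsProbabilityMeasure P] (hP : Continuous (cdf P)) :
    Ioo 0 1 ⊆ range (cdf P) := fun _ hc =>
  mem_range_of_exists_le_of_exists_ge hP
    ((tendsto_cdf_atBot P).eventually_le_const hc.1).exists
    ((tendsto_cdf_atTop P).eventually_const_le hc.2).exists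

theorem sklar_uniqueness_general
    {Ω : Type*} [MeasureSpace Ω] [IsProbabilityMeasure (ℙ : Measure Ω)]
    {n : ℕ} (X : Fin n → Ω → ℝ) (hX : ∀ i, Measurable (X i))
    (F : Fin n → ℝ → ℝ)
    (hFdef : ∀ i t, F i t = (ℙ {ω | X i ω ≤ t}).toReal)
    (hFcont : ∀ i, Continuous (F i))
    (μ μ' : Measure (Fin n → ℝ))
    (hμ : ∀ i, Measure.map (fun v => v i) μ = volume.restrict (Set.Icc (0:ℝ) 1))
    (hμ' : ∀ i, Measure.map (fun v => v i) μ' = volume.restrict (Set.Icc (0:ℝ) 1))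
    (h : ∀ x : Fin n → ℝ, ℙ {ω | ∀ i, X i ω ≤ x i} = μ {v | ∀ i, v i ≤ F i (x i)})
    (h' : ∀ x : Fin n → ℝ, ℙ {ω | ∀ i, X i ω ≤ x i} = μ' {v | ∀ i, v i ≤ F i (x i)}) :
    ∀ u : Fin n → ℝ, (∀ i, u i ∈ Set.Icc (0:ℝ) 1) →
      μ {v | ∀ i, v i ≤ u i} = μ' {v | ∀ i, v i ≤ u i} := by
  have hlaw : ∀ i, IsProbabilityMeasure (Measure.map (X i) ℙ) := fun i =>
    Measure.isProbabilityMeasure_map (hX i).aemeasurable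
  have hFcdf : ∀ i, F i = cdf (Measure.map (X i) ℙ) := fun i => funext fun t => by
    rw [hFdef, cdf_eq_real, measureReal_def, Measure.map_apply (hX i) measurableSet_Iic]
    rfl
  have hopen : ∀ w : Fin n → ℝ, (∀ i, w i ∈ Ioo (0 : ℝ) 1) → μ (Iic w) = μ' (Iic w) := by
    intro w hw
    have hsurj : ∀ i, w i ∈ range (F i) := fun i => by
      rw [hFcdf i]
      exact Ioo_subset_range_cdf _ (hFcdf i ▸ hFcont i) (hw i)
    choose x hx using hsurj
    have hagree := (h x).symm.trans (h' x)
    simp only [hx] at hagree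
    exact hagree
  have hbelow_one : ∀ w : Fin n → ℝ, (∀ i, w i < 1) → μ (Iic w) = μ' (Iic w) := by
    intro w hw
    by_cases hnonpos : ∃ i, w i ≤ 0
    · obtain ⟨i, hi⟩ := hnonpos
      rw [measure_Iic_eq_zero_of_coord_nonpos (hμ i) hi,
        measure_Iic_eq_zero_of_coord_nonpos (hμ' i) hi]
    · push Not at hnonpos
      exact hopen w fun i => ⟨hnonpos i, hw i⟩
  intro u hu
  exact measure_Iic_eq_of_forall_lt_one (fun i => measure_coord_eq_eq_zero (hμ i))
    (fun i => measure_coord_eq_eq_zero (hμ' i)) hbelow_one fun i => (hu i).2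

/-- **Uniqueness part of Sklar's theorem for continuous marginals.**
If `X = (X₁, …, Xₙ)` is a random vector whose marginal distribution functions
`Fᵢ(t) = P(Xᵢ ≤ t)` are all continuous, and `C`, `C′` are two `n`-copulas
(joint distribution functions of probability measures `μ`, `μ′` on `[0,1]ⁿ`
with uniform marginals) satisfying
`P(X₁ ≤ x₁, …, Xₙ ≤ xₙ) = C(F₁(x₁), …, Fₙ(xₙ)) = C′(F₁(x₁), …, Fₙ(xₙ))`
for all `x ∈ ℝⁿ`, then `C = C′` on `[0,1]ⁿ`. -/
theorem sklar_uniqueness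
    {Ω : Type*} [MeasureSpace Ω] [IsProbabilityMeasure (ℙ : Measure Ω)]
    {n : ℕ} (X : Fin n → Ω → ℝ) (hX : ∀ i, Measurable (X i))
    (F : Fin n → ℝ → ℝ)
    (hFdef : ∀ i t, F i t = (ℙ {ω | X i ω ≤ t}).toReal)
    (hFcont : ∀ i, Continuous (F i))
    (μ μ' : Measure (Fin n → ℝ)) [IsProbabilityMeasure μ] [IsProbabilityMeasure μ']
    (hμ : ∀ i, Measure.map (fun v => v i) μ = volume.restrict (Set.Icc (0:ℝ) 1))
    (hμ' : ∀ i, Measure.map (fun v => v i) μ' = volume.restrict (Set.Icc (0:ℝ) 1))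
    (h : ∀ x : Fin n → ℝ, ℙ {ω | ∀ i, X i ω ≤ x i} = μ {v | ∀ i, v i ≤ F i (x i)})
    (h' : ∀ x : Fin n → ℝ, ℙ {ω | ∀ i, X i ω ≤ x i} = μ' {v | ∀ i, v i ≤ F i (x i)}) :
    ∀ u : Fin n → ℝ, (∀ i, u i ∈ Set.Icc (0:ℝ) 1) →
      μ {v | ∀ i, v i ≤ u i} = μ' {v | ∀ i, v i ≤ u i} :=
  sklar_uniqueness_general X hX F hFdef hFcont μ μ' hμ hμ' h h'
end

section
/- Let C be an n-copula with underlying probability measure μ on [0,1]ⁿ, and let F₁,…,Fₙ be the cumulative distribution functions of probability measures ν₁,…,νₙ on ℝ. Then there exists a probability measure H on ℝⁿ whose i-th coordinate marginal is νᵢ for every i, and whose joint distribution function satisfies H((-∞,x₁] × ⋯ × (-∞,xₙ]) = C(F₁(x₁),…,Fₙ(xₙ)) for all (x₁,…,xₙ) ∈ ℝⁿ. (Converse part of Sklar's theorem.) -/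
open MeasureTheory ProbabilityTheory Set Filter Topology

/-!
Push the copula measure `μ` forward under `v ↦ (Q₁ (v₁), …, Qₙ (vₙ))`, where `Qᵢ` is the
quantile function of `νᵢ`. The Galois connection `Qᵢ p ≤ x ↔ p ≤ Fᵢ x` (for `0 < p < 1`) shows that
`Qᵢ` maps the uniform law on `[0,1]` to `νᵢ`, which gives the marginals, and, since `μ` is carried
by `(0,1)ⁿ`, that the joint distribution function of the push-forward is `C(F₁(x₁), …, Fₙ(xₙ))`.
-/

theorem StieltjesFunction.csInf_le_iff (f : StieltjesFunction ℝ) {p : ℝ}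
    (hp_lt : ∃ a, f a < p) (hp_le : ∃ b, p ≤ f b) (x : ℝ) :
    sInf {t | p ≤ f t} ≤ x ↔ p ≤ f x := by
  set S := {t | p ≤ f t}
  obtain ⟨a, ha⟩ := hp_lt
  have hS : S.Nonempty := hp_le
  have hS_bdd : BddBelow S :=
    ⟨a, fun t ht => le_of_not_gt fun hta => (ht.trans (f.mono hta.le)).not_gt ha⟩
  refine ⟨fun hx => ?_, fun hx => csInf_le hS_bdd hx⟩
  suffices p ≤ f (sInf S) from this.trans (f.mono hx)
  have hright : Tendsto f (𝓝[>] (sInf S)) (𝓝 (f (sInf S))) :=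
    (f.right_continuous _).tendsto.mono_left (nhdsWithin_mono _ Ioi_subset_Ici_self)
  refine ge_of_tendsto hright ?_
  filter_upwards [self_mem_nhdsWithin] with t ht
  obtain ⟨s, hs, hst⟩ := exists_lt_of_csInf_lt hS ht
  exact hs.trans (f.mono hst.le)

theorem ae_restrict_Icc_mem_Ioo {μ : Measure ℝ} [NullSingletonClass μ] (a b : ℝ) :
    ∀ᵐ p ∂μ.restrict (Icc a b), p ∈ Ioo a b := by
  rw [← Measure.restrict_congr_set Ioo_ae_eq_Icc]
  exact ae_restrict_mem measurableSet_Ioo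

namespace ProbabilityTheory

/-- Outside `(0, 1)` the infimum would be taken over `ℝ` or `∅`; the value there is irrelevant
and set to `0`. -/
noncomputable def quantile (ν : Measure ℝ) (p : ℝ) : ℝ :=
  if p ∈ Ioo 0 1 then sInf {x | p ≤ cdf ν x} else 0

variable (ν : Measure ℝ)

theorem quantile_le_iff {p : ℝ} (hp : p ∈ Ioo 0 1) (x : ℝ) :
    quantile ν p ≤ x ↔ p ≤ cdf ν x := by
  rw [quantile, if_pos hp]
  exact (cdf ν).csInf_le_iff ((tendsto_cdf_atBot ν).eventually_lt_const hp.1).exists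
    (((tendsto_cdf_atTop ν).eventually_const_le hp.2).exists) x

theorem measurable_quantile : Measurable (quantile ν) := by
  refine measurable_of_Iic fun x => ?_
  have hpre : quantile ν ⁻¹' Iic x =
      Ioo 0 1 ∩ Iic (cdf ν x) ∪ (Ioo 0 1)ᶜ ∩ {_p | 0 ≤ x} := by
    ext p
    by_cases hp : p ∈ Ioo 0 1
    · simp [hp, quantile_le_iff ν hp]
    · simp [hp, quantile]
  rw [hpre]
  exact (measurableSet_Ioo.inter measurableSet_Iic).union
    (measurableSet_Ioo.compl.inter (MeasurableSet.const _))

theorem map_quantile_volume_Icc [IsProbabilityMeasure ν] :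
    (volume.restrict (Icc 0 1)).map (quantile ν) = ν := by
  have : IsProbabilityMeasure (volume.restrict (Icc (0 : ℝ) 1)) := ⟨by simp⟩
  have : IsProbabilityMeasure ((volume.restrict (Icc 0 1)).map (quantile ν)) :=
    Measure.isProbabilityMeasure_map (measurable_quantile ν).aemeasurable
  refine Measure.ext_of_Iic _ _ fun x => ?_
  have hpre : quantile ν ⁻¹' Iic x =ᵐ[volume.restrict (Icc 0 1)] Iic (cdf ν x) := by
    filter_upwards [ae_restrict_Icc_mem_Ioo 0 1] with p hp
    exact propext (quantile_le_iff ν hp x)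
  have hcdf : Iic (cdf ν x) ∩ Icc 0 1 = Icc 0 (cdf ν x) := by
    ext p
    simp only [mem_inter_iff, mem_Iic, mem_Icc]
    exact ⟨fun ⟨hpc, hp0, _⟩ => ⟨hp0, hpc⟩,
      fun ⟨hp0, hpc⟩ => ⟨hpc, hp0, hpc.trans (cdf_le_one ν x)⟩⟩
  rw [Measure.map_apply (measurable_quantile ν) measurableSet_Iic, measure_congr hpre,
    Measure.restrict_apply measurableSet_Iic, hcdf, Real.volume_Icc, sub_zero, ofReal_cdf]

end ProbabilityTheory

/-- **Converse part of Sklar's theorem.**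
If `C` is an `n`-copula (the joint distribution function of a probability measure `μ`
on `[0,1]ⁿ` with uniform marginals) and `F₁, …, Fₙ` are the cumulative distribution
functions of probability measures `ν₁, …, νₙ` on `ℝ`, then there exists a probability
measure `H` on `ℝⁿ` whose `i`-th coordinate marginal is `νᵢ` for each `i` and whose
joint distribution function is `H((-∞,x₁] × ⋯ × (-∞,xₙ]) = C(F₁(x₁), …, Fₙ(xₙ))`. -/
theorem sklar_converse
    {n : ℕ} (μ : Measure (Fin n → ℝ)) [IsProbabilityMeasure μ]
    (hμ : ∀ i, Measure.map (fun v => v i) μ = volume.restrict (Set.Icc (0:ℝ) 1))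
    (ν : Fin n → Measure ℝ) [∀ i, IsProbabilityMeasure (ν i)]
    (F : Fin n → ℝ → ℝ) (hF : ∀ i t, F i t = (ν i (Set.Iic t)).toReal) :
    ∃ H : Measure (Fin n → ℝ), IsProbabilityMeasure H ∧
      (∀ i, Measure.map (fun v => v i) H = ν i) ∧
      ∀ x : Fin n → ℝ, H {v | ∀ i, v i ≤ x i} = μ {v | ∀ i, v i ≤ F i (x i)} := by
  set G : (Fin n → ℝ) → (Fin n → ℝ) := fun v i => quantile (ν i) (v i)
  have hG : Measurable G :=
    measurable_pi_lambda _ fun i => (measurable_quantile (ν i)).comp (measurable_pi_apply i)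
  have hμ_Ioo : ∀ᵐ v ∂μ, ∀ i, v i ∈ Ioo 0 1 := ae_all_iff.mpr fun i =>
    ae_of_ae_map (measurable_pi_apply i).aemeasurable (hμ i ▸ ae_restrict_Icc_mem_Ioo 0 1)
  refine ⟨μ.map G, Measure.isProbabilityMeasure_map hG.aemeasurable, fun i => ?_, fun x => ?_⟩
  · rw [Measure.map_map (measurable_pi_apply i) hG]
    change μ.map (quantile (ν i) ∘ fun v => v i) = ν i
    rw [← Measure.map_map (measurable_quantile (ν i)) (measurable_pi_apply i), hμ i,
      map_quantile_volume_Icc]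
  · refine (Measure.map_apply hG measurableSet_Iic).trans (measure_congr ?_)
    filter_upwards [hμ_Ioo] with v hv
    refine propext (forall_congr' fun i => ?_)
    rw [hF, ← measureReal_def, ← cdf_eq_real]
    exact quantile_le_iff (ν i) (hv i) (x i)
end

section
/- Let X = (X₁,…,Xₙ) be a random vector whose marginal distribution functions Fᵢ(t) = P(Xᵢ ≤ t) are all continuous, let H(x₁,…,xₙ) = P(X₁ ≤ x₁,…,Xₙ ≤ xₙ), and let C be the n-copula given by the joint distribution function of (F₁(X₁),…,Fₙ(Xₙ)). Then for all (u₁,…,uₙ) ∈ (0,1)ⁿ, C(u₁,…,uₙ) = H(F₁^{(-1)}(u₁),…,Fₙ^{(-1)}(uₙ)), where F^{(-1)}(u) = inf{x : F(x) ≥ u} is the quasi-inverse. -/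
/-!
With `aᵢ = Fᵢ⁽⁻¹⁾(uᵢ)`, continuity of `Fᵢ` gives `Fᵢ(aᵢ) = uᵢ`, so `Xᵢ ≤ aᵢ` implies
`Fᵢ(Xᵢ) ≤ uᵢ`. Conversely `Fᵢ(Xᵢ) ≤ Fᵢ(aᵢ)` with `Xᵢ > aᵢ` puts `Xᵢ` in an interval `(aᵢ, y]` on
which `Fᵢ` is flat, and these intervals carry no mass. Hence the two events of the theorem
differ by a null set.
-/

open MeasureTheory ProbabilityTheory Set Filter Topology

theorem Continuous.apply_csInf_setOf_le_eq {f : ℝ → ℝ} (hf : Continuous f) {u : ℝ}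
    (hne : {x | u ≤ f x}.Nonempty) (hbdd : BddBelow {x | u ≤ f x}) :
    f (sInf {x | u ≤ f x}) = u := by
  set a := sInf {x | u ≤ f x}
  have hmem : u ≤ f a := (isClosed_le continuous_const hf).csInf_mem hne hbdd
  have hleft : MapsTo f (Iio a) (Iic u) := fun x hx =>
    show f x ≤ u from (not_le.1 fun h => (csInf_le hbdd h).not_gt hx).le
  have : f a ∈ closure (Iic u) :=
    map_mem_closure hf (by simp [closure_Iio' nonempty_Iio]) hleft
  exact le_antisymm (by simpa using this) hmem

namespace ProbabilityTheory

theorem cdf_csInf_setOf_le_eq {μ : Measure ℝ} (hμ : Continuous (cdf μ)) {u : ℝ}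
    (hu : u ∈ Ioo 0 1) : cdf μ (sInf {x | u ≤ cdf μ x}) = u :=
  hμ.apply_csInf_setOf_le_eq ((tendsto_cdf_atTop μ).eventually_const_le hu.2).exists <| by
    obtain ⟨m, hm⟩ := eventually_atBot.1 ((tendsto_cdf_atBot μ).eventually_lt_const hu.1)
    exact ⟨m, fun x hx => le_of_not_ge fun hxm => (hm x hxm).not_ge hx⟩

section ProbabilityMeasure

variable {μ : Measure ℝ} [IsProbabilityMeasure μ]

theorem measure_Ioc_eq_zero_of_cdf_le {a b : ℝ} (h : cdf μ b ≤ cdf μ a) : μ (Ioc a b) = 0 := by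
  rw [← measure_cdf μ, StieltjesFunction.measure_Ioc, ENNReal.ofReal_eq_zero]
  linarith

theorem ae_le_of_cdf_le_cdf (a : ℝ) : ∀ᵐ x ∂μ, cdf μ x ≤ cdf μ a → x ≤ a := by
  set S := {x | a < x ∧ cdf μ x ≤ cdf μ a}
  have hS : ∀ y ∈ S, μ (S ∩ Iic y) = 0 := fun y hy =>
    measure_mono_null (show S ∩ Iic y ⊆ Ioc a y from fun x hx => ⟨hx.1.1, hx.2⟩)
      (measure_Ioc_eq_zero_of_cdf_le hy.2)
  refine ae_iff.2 <| measure_mono_null (fun x hx => ?_) (measure_null_of_locally_null S ?_)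
  · push Not at hx
    exact ⟨hx.2, hx.1⟩
  -- Near each `x ∈ S`, `S` coincides with `S ∩ Iic y` for some `y ∈ S` (take `y = x` if `x = max S`).
  intro x hx
  by_cases htop : ∃ y ∈ S, x < y
  · obtain ⟨y, hy, hxy⟩ := htop
    exact ⟨S ∩ Iic y, inter_mem self_mem_nhdsWithin
      (mem_nhdsWithin_of_mem_nhds (Iic_mem_nhds hxy)), hS y hy⟩
  · push Not at htop
    exact ⟨S ∩ Iic x, mem_of_superset self_mem_nhdsWithin fun y hy => ⟨hy, htop y hy⟩, hS x hx⟩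

end ProbabilityMeasure

section RandomVariable

variable {Ω : Type*} [MeasurableSpace Ω] {P : Measure Ω} [IsProbabilityMeasure P] {X : Ω → ℝ}

theorem cdf_map_apply_s3 (hX : Measurable X) (t : ℝ) :
    cdf (P.map X) t = P.real {ω | X ω ≤ t} := by
  have := Measure.isProbabilityMeasure_map (μ := P) hX.aemeasurable
  rw [cdf_eq_real, map_measureReal_apply hX measurableSet_Iic]
  rfl

theorem ae_le_of_cdf_map_le (hX : Measurable X) (a : ℝ) :
    ∀ᵐ ω ∂P, cdf (P.map X) (X ω) ≤ cdf (P.map X) a → X ω ≤ a := by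
  have := Measure.isProbabilityMeasure_map (μ := P) hX.aemeasurable
  exact ae_of_ae_map hX.aemeasurable (ae_le_of_cdf_le_cdf a)

end RandomVariable

end ProbabilityTheory

/-- If `X = (X₁, …, Xₙ)` has continuous marginal distribution functions
`Fᵢ(t) = P(Xᵢ ≤ t)`, `H` is the joint distribution function of `X`, and `C` is the copula
given by the joint distribution function of `(F₁(X₁), …, Fₙ(Xₙ))`, then for all
`u ∈ (0,1)ⁿ`, `C(u₁, …, uₙ) = H(F₁⁽⁻¹⁾(u₁), …, Fₙ⁽⁻¹⁾(uₙ))`, where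
`F⁽⁻¹⁾(u) = inf {x | F x ≥ u}` is the quasi-inverse. -/
theorem copula_eq_H_of_quasi_inverse
    {Ω : Type*} [MeasureSpace Ω] [IsProbabilityMeasure (ℙ : Measure Ω)]
    {n : ℕ} (X : Fin n → Ω → ℝ) (hX : ∀ i, Measurable (X i))
    (F : Fin n → ℝ → ℝ)
    (hFdef : ∀ i t, F i t = (ℙ {ω | X i ω ≤ t}).toReal)
    (hFcont : ∀ i, Continuous (F i))
    (Finv : Fin n → ℝ → ℝ)
    (hFinv : ∀ i u, Finv i u = sInf {x | u ≤ F i x}) :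
    ∀ u : Fin n → ℝ, (∀ i, u i ∈ Set.Ioo (0:ℝ) 1) →
      ℙ {ω | ∀ i, F i (X i ω) ≤ u i} = ℙ {ω | ∀ i, X i ω ≤ Finv i (u i)} := by
  intro u hu
  have hF : ∀ i, F i = cdf (Measure.map (X i) ℙ) := fun i => funext fun t => by
    rw [hFdef, cdf_map_apply_s3 (hX i), measureReal_def]
  have hFinv_apply : ∀ i, F i (Finv i (u i)) = u i := fun i => by
    rw [hFinv, hF i]
    exact cdf_csInf_setOf_le_eq (hF i ▸ hFcont i) (hu i)
  have hae : ∀ᵐ ω ∂ℙ, ∀ i, F i (X i ω) ≤ u i → X i ω ≤ Finv i (u i) :=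
    ae_all_iff.2 fun i => by
      simpa only [← hF i, hFinv_apply i] using ae_le_of_cdf_map_le (P := ℙ) (hX i) (Finv i (u i))
  refine le_antisymm (measure_mono_ae ?_) (measure_mono fun ω hω i => ?_)
  · filter_upwards [hae] with ω h hω i
    exact h i (hω i)
  · rw [← hFinv_apply i, hF i]
    exact monotone_cdf _ (hω i)
end

section
/- Let K be a real symmetric positive definite n×n matrix, let W̃ = diag(w₁,…,wₙ) with wᵢ ≥ 0 for all i, set W̃^{1/2} = diag(√w₁,…,√wₙ), B = I + W̃^{1/2} K W̃^{1/2}, and Q = W̃^{1/2} B⁻¹ W̃^{1/2}. Then for any vectors f, r ∈ ℝⁿ, the Newton update f^{new} = f − (−W̃ − K⁻¹)⁻¹(r − K⁻¹f) satisfies f^{new} = (K⁻¹ + W̃)⁻¹(W̃f + r) = K·a, where b = W̃f + r and a = b − Q K b. -/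
/-!
Writing `W̃ = S * S` with `S = W̃^{1/2}`, the Woodbury identity gives
`(K⁻¹ + S S)⁻¹ = K - K S (I + S K S)⁻¹ S K = K - K Q K`; it applies because `B = I + S K S` is
positive definite, so only `B`, never `W̃`, has to be inverted. The first equality is just the
algebra of one Newton step.
-/

open Matrix

namespace Matrix

variable {ι 𝕜 : Type*} [Fintype ι] [DecidableEq ι] [Field 𝕜]

theorem neg_inv_of_isUnit {A : Matrix ι ι 𝕜} (hA : IsUnit A) : (-A)⁻¹ = -A⁻¹ :=
  inv_eq_right_inv (by rw [neg_mul_neg, mul_nonsing_inv _ ((isUnit_iff_isUnit_det A).1 hA)])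

theorem sub_inv_neg_sub_mulVec {P W : Matrix ι ι 𝕜} (h : IsUnit (P + W)) (f r : ι → 𝕜) :
    f - (-W - P)⁻¹ *ᵥ (r - P *ᵥ f) = (P + W)⁻¹ *ᵥ (W *ᵥ f + r) := by
  have hf : f = (P + W)⁻¹ *ᵥ ((P + W) *ᵥ f) := by
    rw [mulVec_mulVec, nonsing_inv_mul _ ((isUnit_iff_isUnit_det _).1 h), one_mulVec]
  rw [show -W - P = -(P + W) by abel, neg_inv_of_isUnit h, neg_mulVec, sub_neg_eq_add]
  nth_rewrite 1 [hf]
  rw [← mulVec_add, add_mulVec]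
  abel_nf

theorem inv_add_mul_self_eq {K S : Matrix ι ι 𝕜} (hK : IsUnit K) (hB : IsUnit (1 + S * K * S)) :
    (K⁻¹ + S * S)⁻¹ = K - K * (S * (1 + S * K * S)⁻¹ * S) * K := by
  have hKK : K⁻¹⁻¹ = K := nonsing_inv_nonsing_inv _ ((isUnit_iff_isUnit_det K).1 hK)
  have := add_mul_mul_inv_eq_sub K⁻¹ S 1 S (isUnit_nonsing_inv_iff.2 hK) isUnit_one
    (by rwa [inv_one, hKK])
  simp only [Matrix.mul_one, inv_one, hKK] at this
  rw [this]; simp only [Matrix.mul_assoc]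

end Matrix

open scoped ComplexOrder in
theorem Matrix.PosDef.one_add_mul_mul {ι 𝕜 : Type*} [Fintype ι] [DecidableEq ι] [RCLike 𝕜]
    {K S : Matrix ι ι 𝕜} (hK : K.PosDef) (hS : S.IsHermitian) :
    (1 + S * K * S).PosDef := by
  have := hK.posSemidef.conjTranspose_mul_mul_same S
  rw [hS.eq] at this
  exact PosDef.one.add_posSemidef this

theorem Matrix.diagonal_sqrt_mul_self {ι : Type*} [Fintype ι] [DecidableEq ι] {w : ι → ℝ}
    (hw : ∀ i, 0 ≤ w i) :
    diagonal (fun i => √(w i)) * diagonal (fun i => √(w i)) = diagonal w := by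
  rw [diagonal_mul_diagonal]
  exact congrArg _ (funext fun i => Real.mul_self_sqrt (hw i))

/-- **The modified Newton update in the stable parametrization.**
With `K` real symmetric positive definite, `W̃ = diag(w)` with `wᵢ ≥ 0`,
`B = I + W̃^{1/2} K W̃^{1/2}`, `Q = W̃^{1/2} B⁻¹ W̃^{1/2}`, `b = W̃ f + r` and
`a = b − Q K b`, the Newton update
`f^new = f − (−W̃ − K⁻¹)⁻¹ (r − K⁻¹ f)` satisfies
`f^new = (K⁻¹ + W̃)⁻¹ (W̃ f + r) = K a`. -/
theorem newton_update_stable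
    {n : ℕ} (K : Matrix (Fin n) (Fin n) ℝ) (hK : K.PosDef)
    (w : Fin n → ℝ) (hw : ∀ i, 0 ≤ w i)
    (Wh B Q : Matrix (Fin n) (Fin n) ℝ)
    (hWh : Wh = Matrix.diagonal fun i => Real.sqrt (w i))
    (hB : B = 1 + Wh * K * Wh)
    (hQ : Q = Wh * B⁻¹ * Wh)
    (f r b a : Fin n → ℝ)
    (hb : b = Matrix.diagonal w *ᵥ f + r)
    (ha : a = b - Q *ᵥ (K *ᵥ b)) :
    f - (-(Matrix.diagonal w) - K⁻¹)⁻¹ *ᵥ (r - K⁻¹ *ᵥ f)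
        = (K⁻¹ + Matrix.diagonal w)⁻¹ *ᵥ (Matrix.diagonal w *ᵥ f + r) ∧
      (K⁻¹ + Matrix.diagonal w)⁻¹ *ᵥ (Matrix.diagonal w *ᵥ f + r) = K *ᵥ a := by
  have hW : Wh * Wh = diagonal w := hWh ▸ diagonal_sqrt_mul_self hw
  have hWpsd : (diagonal w).PosSemidef := posSemidef_diagonal_iff.2 hw
  have hWhHerm : Wh.IsHermitian := by
    rw [hWh]; exact isHermitian_diagonal_of_self_adjoint _ (funext fun _ => star_trivial _)
  have hBpd : (1 + Wh * K * Wh).PosDef := hK.one_add_mul_mul hWhHerm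
  have hinv : (K⁻¹ + diagonal w)⁻¹ = K - K * Q * K := by
    rw [← hW, inv_add_mul_self_eq hK.isUnit hBpd.isUnit, hQ, hB]
  refine ⟨sub_inv_neg_sub_mulVec (hK.inv.add_posSemidef hWpsd).isUnit f r, ?_⟩
  rw [← hb, ha, hinv, sub_mulVec, mulVec_sub, mulVec_mulVec, mulVec_mulVec, Matrix.mul_assoc]
end
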